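/- arXiv:1301.4399 — 5 statements merged into one kernel-verified Lean document; each statement's English description precedes it below -/
import Mathlib

section
/- In ℂG̃_n, the elements e_{i,i+1} satisfy the braid-type relation e_{i,i+1} e_{i+1,i+2} e_{i,i+1} = e_{i+1,i+2} e_{i,i+1} e_{i+1,i+2} for i = 1,...,n−2. -/
/-- The action of the symmetric group `S_n` on `G^n` permuting the copies of `G`. -/
def permHom (n : ℕ) (G : Type) [Group G] : Equiv.Perm (Fin n) →* MulAut (Fin n → G) where
  toFun σ :=
    { Equiv.arrowCongr σ (Equiv.refl G) with
      map_mul' := fun _ _ => rfl }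
  map_one' := MulEquiv.ext fun _ => rfl
  map_mul' := fun _ _ => MulEquiv.ext fun _ => rfl

/-- The wreath product `G̃_n = G^n ⋊ S_n` of `G` by the symmetric group. -/
abbrev Wreath (n : ℕ) (G : Type) [Group G] :=
  SemidirectProduct (Fin n → G) (Equiv.Perm (Fin n)) (permHom n G)

noncomputable section

/-- The element `s_a` of `ℂG̃_n`: the simple transposition of `a` and `a+1`
(0-based indexing) in the symmetric-group part.  (Junk value `1` out of range.) -/
def sE (n : ℕ) (G : Type) [Group G] (a : ℕ) : MonoidAlgebra ℂ (Wreath n G) :=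
  if h : a + 1 < n then
    MonoidAlgebra.of ℂ (Wreath n G)
      (SemidirectProduct.inr (Equiv.swap ⟨a, Nat.lt_of_succ_lt h⟩ ⟨a + 1, h⟩))
  else 1

/-- The element `e_{i,j} = (1/|G|) Σ_{g ∈ G} g_i g_j⁻¹` of `ℂG̃_n` (0-based indexing),
where `g_i` is the image of `g` in the `i`-th copy of `G`.  (Junk value `1` out of range;
note `e_{i,i} = 1`.) -/
def eE (n : ℕ) (G : Type) [Group G] [Fintype G] (i j : ℕ) : MonoidAlgebra ℂ (Wreath n G) :=
  if h : i < n ∧ j < n then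
    ((Fintype.card G : ℂ))⁻¹ • ∑ g : G,
      MonoidAlgebra.of ℂ (Wreath n G)
        (SemidirectProduct.inl (Pi.mulSingle ⟨i, h.1⟩ g * Pi.mulSingle ⟨j, h.2⟩ g⁻¹))
  else 1

/-- The image `g_l` in `ℂG̃_n` of an element `g ∈ G` placed in the `l`-th copy of `G`
(0-based indexing; junk value `1` out of range). -/
def gE (n : ℕ) (G : Type) [Group G] (l : ℕ) (g : G) : MonoidAlgebra ℂ (Wreath n G) :=
  if h : l < n then
    MonoidAlgebra.of ℂ (Wreath n G) (SemidirectProduct.inl (Pi.mulSingle ⟨l, h⟩ g))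
  else 1

/-- The image `g_i^{(α)}` in `ℂG̃_n` of the normalized class sum
`g^{(α)} = (1/|C_α|) Σ_{g ∈ C_α} g` placed in the `i`-th copy of `G`
(0-based indexing; junk value `1` out of range). -/
def gClassE (n : ℕ) (G : Type) [Group G] [Fintype G] (i : ℕ) (c : ConjClasses G) :
    MonoidAlgebra ℂ (Wreath n G) :=
  if h : i < n then
    (((Set.toFinite (ConjClasses.carrier c)).toFinset.card : ℂ))⁻¹ •
      ∑ g ∈ (Set.toFinite (ConjClasses.carrier c)).toFinset,
        MonoidAlgebra.of ℂ (Wreath n G) (SemidirectProduct.inl (Pi.mulSingle ⟨i, h⟩ g))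
  else 1

end

/-!
Write `d_{ab}(g) = g_a g_b⁻¹ ∈ G^n` (`pairedSingle a b g`), so that `e_{a,b}` is the average
of the `d_{ab}(g)`. For distinct `a, b, c` one has
`d_{ab}(g) d_{bc}(h) d_{ab}(k) = d_{bc}(g⁻¹h) d_{ab}(gk) d_{bc}(g)`,
and `(g, h, k) ↦ (g⁻¹h, gk, g)` is a bijection of `G³`; summing over `G³` gives the relation.
-/

open Finset

section Braid

variable {G : Type*} [Group G]

theorem sum_mul_sum_mul_sum_eq_of_braid [Fintype G] {R : Type*} [NonUnitalNonAssocSemiring R]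
    (x y : G → R) (hxy : ∀ g h k, x g * y h * x k = y (g⁻¹ * h) * x (g * k) * y g) :
    (∑ g, x g) * (∑ g, y g) * (∑ g, x g) = (∑ g, y g) * (∑ g, x g) * (∑ g, y g) := by
  let e : (G × G) × G ≃ (G × G) × G :=
    { toFun := fun ⟨⟨g, h⟩, k⟩ => ⟨⟨g⁻¹ * h, g * k⟩, g⟩
      invFun := fun ⟨⟨p, q⟩, r⟩ => ⟨⟨r, r * p⟩, r⁻¹ * q⟩
      left_inv := fun ⟨⟨g, h⟩, k⟩ => by simp
      right_inv := fun ⟨⟨p, q⟩, r⟩ => by simp }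
  simp only [sum_mul_sum, ← Fintype.sum_prod_type']
  exact Fintype.sum_equiv e _ _ fun ⟨⟨g, h⟩, k⟩ => hxy g h k

variable {ι : Type*} [DecidableEq ι]

def pairedSingle (a b : ι) (g : G) : ι → G :=
  Pi.mulSingle a g * Pi.mulSingle b g⁻¹

theorem pairedSingle_braid {a b c : ι} (hab : a ≠ b) (hac : a ≠ c) (hbc : b ≠ c) (g h k : G) :
    pairedSingle a b g * pairedSingle b c h * pairedSingle a b k =
      pairedSingle b c (g⁻¹ * h) * pairedSingle a b (g * k) * pairedSingle b c g := by
  funext x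
  simp only [pairedSingle, Pi.mul_apply]
  rcases eq_or_ne x a with rfl | hxa
  · simp [hab, hac]
  rcases eq_or_ne x b with rfl | hxb
  · simp [hxa, hbc]
    group
  rcases eq_or_ne x c with rfl | hxc
  · simp [hxa, hxb]
  · simp [hxa, hxb, hxc]

theorem sum_pairedSingle_braid [Fintype G] {R : Type*} [Semiring R] (φ : (ι → G) →* R)
    {a b c : ι} (hab : a ≠ b) (hac : a ≠ c) (hbc : b ≠ c) :
    (∑ g, φ (pairedSingle a b g)) * (∑ g, φ (pairedSingle b c g)) *
        (∑ g, φ (pairedSingle a b g)) =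
      (∑ g, φ (pairedSingle b c g)) * (∑ g, φ (pairedSingle a b g)) *
        (∑ g, φ (pairedSingle b c g)) :=
  sum_mul_sum_mul_sum_eq_of_braid _ _ fun g h k => by
    simp only [← map_mul, pairedSingle_braid hab hac hbc]

end Braid

theorem eE_eq_smul_sum (n : ℕ) (G : Type) [Group G] [Fintype G] {i j : ℕ} (hi : i < n)
    (hj : j < n) :
    eE n G i j = (Fintype.card G : ℂ)⁻¹ • ∑ g : G,
      ((MonoidAlgebra.of ℂ (Wreath n G)).comp SemidirectProduct.inl)
        (pairedSingle ⟨i, hi⟩ ⟨j, hj⟩ g) :=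
  dif_pos ⟨hi, hj⟩

/-- In `ℂG̃_n` the elements `e_{i,i+1}` satisfy the braid-type relation
`e_{i,i+1} e_{i+1,i+2} e_{i,i+1} = e_{i+1,i+2} e_{i,i+1} e_{i+1,i+2}` (0-based indexing). -/
theorem eE_braid (n : ℕ) (G : Type) [Group G] [Fintype G]
    (i : ℕ) (hi : i + 2 < n) :
    eE n G i (i + 1) * eE n G (i + 1) (i + 2) * eE n G i (i + 1) =
      eE n G (i + 1) (i + 2) * eE n G i (i + 1) * eE n G (i + 1) (i + 2) := by
  rw [eE_eq_smul_sum n G (by omega : i < n) (by omega : i + 1 < n),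
    eE_eq_smul_sum n G (by omega : i + 1 < n) hi]
  simp only [smul_mul_smul]
  congr 1
  exact sum_pairedSingle_braid _ (by simp [Fin.ext_iff]) (by simp [Fin.ext_iff])
    (by simp [Fin.ext_iff])
end

section
/- The Jucys–Murphy elements of ℂG̃_n, defined recursively by j̃_1 = 0 and j̃_{i+1} = s_i j̃_i s_i + e_{i,i+1} s_i, pairwise commute: j̃_k j̃_l = j̃_l j̃_k for all k, l = 1,...,n. -/
/-
Write `e_{ab}s_{ab}` for the average over `g ∈ G` of the twisted transpositions
`g_a g_b⁻¹ (a b)`. Conjugating by `h = (f, σ) ∈ G̃_n` permutes these averages: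
`h (e_{ab}s_{ab}) h⁻¹ = e_{σa,σb}s_{σa,σb}`, because `h` also conjugates the twisting factor
`g` to `f(σa) g f(σb)⁻¹`, and that is a bijection of `G`. Since `s_i` swaps `i` and `i+1` and
fixes all `a < i`, the recursion unfolds to `j̃_{k+1} = Σ_{a<k} e_{ak}s_{ak}` (0-based).
Put `T_m = Σ_{a,b<m} e_{ab}s_{ab}`; then `2 j̃_{k+1} = T_{k+1} - T_k - 1` (the diagonal terms
are `1`). Every summand of `T_m` is an average of group elements whose permutation preserves
`{0, …, m'-1}` for `m' ≥ m`, so it commutes with `T_{m'}`. Hence the `T_m` commute pairwise and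
all `j̃_k` lie in the commutative subalgebra they generate.
-/

namespace Wreath

open SemidirectProduct

variable {n : ℕ} {G : Type} [Group G]

theorem permHom_apply (σ : Equiv.Perm (Fin n)) (f : Fin n → G) (i : Fin n) :
    permHom n G σ f i = f (σ.symm i) := rfl

variable (n) in
def twistedSwap (g : G) (a b : Fin n) : Wreath n G :=
  inl (Pi.mulSingle a g * Pi.mulSingle b g⁻¹) * inr (Equiv.swap a b)

theorem twistedSwap_self (g : G) (a : Fin n) : twistedSwap n g a a = 1 := by
  simp [twistedSwap, ← Pi.mulSingle_mul, Equiv.swap_self, ← Equiv.Perm.one_def]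

theorem mul_twistedSwap (h : Wreath n G) (g : G) (a b : Fin n) :
    h * twistedSwap n g a b =
      twistedSwap n (h.left (h.right a) * g * (h.left (h.right b))⁻¹) (h.right a) (h.right b) *
        h := by
  obtain ⟨f, σ⟩ := h
  rcases eq_or_ne a b with rfl | hab
  · simp [twistedSwap_self]
  refine SemidirectProduct.ext ?_ ?_
  · funext i
    simp only [twistedSwap, mul_left, mul_right, left_inl, left_inr, right_inl, right_inr,
      Pi.mul_apply, permHom_apply, Pi.mulSingle_apply, map_one, mul_one, one_mul]
    rw [Equiv.symm_swap, Equiv.swap_apply_def]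
    obtain rfl | hia := eq_or_ne i (σ a)
    · simp [hab]
    obtain rfl | hib := eq_or_ne i (σ b)
    · simp [hab.symm]; group
    · have : σ.symm i ≠ a := by rintro rfl; simp at hia
      have : σ.symm i ≠ b := by rintro rfl; simp at hib
      simp [*]
  · simp [twistedSwap, Equiv.swap_apply_apply, mul_assoc]

theorem twistedSwap_comm (g : G) (a b : Fin n) :
    twistedSwap n g a b = twistedSwap n g⁻¹ b a := by
  obtain rfl | hab := eq_or_ne a b
  · simp [twistedSwap_self]
  rw [twistedSwap, twistedSwap, inv_inv, Equiv.swap_comm,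
    (Pi.mulSingle_commute (f := fun _ : Fin n => G) hab g g⁻¹).eq]

variable [Fintype G]

open MonoidAlgebra

-- The paper's `e_{a,b} s_{a,b}`.
variable (n G) in
noncomputable def eSwap (a b : Fin n) : MonoidAlgebra ℂ (Wreath n G) :=
  (Fintype.card G : ℂ)⁻¹ • ∑ g : G, of ℂ _ (twistedSwap n g a b)

theorem of_mul_eSwap (h : Wreath n G) (a b : Fin n) :
    of ℂ _ h * eSwap n G a b = eSwap n G (h.right a) (h.right b) * of ℂ _ h := by
  rw [eSwap, eSwap, mul_smul_comm, smul_mul_assoc, Finset.mul_sum, Finset.sum_mul]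
  congr 1
  let conj : G ≃ G :=
    (Equiv.mulLeft (h.left (h.right a))).trans (Equiv.mulRight (h.left (h.right b))⁻¹)
  refine Fintype.sum_equiv conj _ _ fun g => ?_
  rw [← map_mul, ← map_mul, mul_twistedSwap]
  rfl

theorem eSwap_comm (a b : Fin n) : eSwap n G a b = eSwap n G b a := by
  rw [eSwap, eSwap, Fintype.sum_equiv (Equiv.inv G) _ (fun g => of ℂ _ (twistedSwap n g b a))
    fun g => by rw [twistedSwap_comm]; rfl]

theorem eSwap_self (a : Fin n) : eSwap n G a a = 1 := by
  simp [eSwap, twistedSwap_self, Finset.sum_const, Fintype.card_ne_zero, one_def]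

-- The paper's `e_{a,b} s_{a,b}`.
variable (n G) in
noncomputable def eSwapSum (s : Finset (Fin n)) : MonoidAlgebra ℂ (Wreath n G) :=
  ∑ a ∈ s, ∑ b ∈ s, eSwap n G a b

theorem of_mul_eSwapSum (h : Wreath n G) (s : Finset (Fin n)) :
    of ℂ _ h * eSwapSum n G s = eSwapSum n G (s.map h.right.toEmbedding) * of ℂ _ h := by
  simp only [eSwapSum, Finset.sum_map, Finset.mul_sum, Finset.sum_mul, of_mul_eSwap]
  rfl

theorem of_commute_eSwapSum {h : Wreath n G} {s : Finset (Fin n)}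
    (hs : ∀ a ∈ s, h.right a ∈ s) : Commute (of ℂ _ h) (eSwapSum n G s) := by
  have hmap : s.map h.right.toEmbedding = s :=
    Finset.map_eq_of_subset fun _ hx => by
      obtain ⟨a, ha, rfl⟩ := Finset.mem_map.1 hx
      exact hs a ha
  unfold Commute SemiconjBy
  rw [of_mul_eSwapSum, hmap]

theorem eSwap_commute_eSwapSum {s : Finset (Fin n)} {a b : Fin n} (ha : a ∈ s) (hb : b ∈ s) :
    Commute (eSwap n G a b) (eSwapSum n G s) := by
  refine (Commute.sum_left _ _ _ fun g _ => of_commute_eSwapSum fun x hx => ?_).smul_left _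
  rw [twistedSwap, mul_right, right_inl, right_inr, one_mul, Equiv.swap_apply_def]
  split_ifs <;> assumption

theorem eSwapSum_commute_of_subset {s t : Finset (Fin n)} (hst : s ⊆ t) :
    Commute (eSwapSum n G s) (eSwapSum n G t) :=
  Commute.sum_left _ _ _ fun _ ha => Commute.sum_left _ _ _ fun _ hb =>
    eSwap_commute_eSwapSum (hst ha) (hst hb)

theorem eSwapSum_insert {s : Finset (Fin n)} {a : Fin n} (ha : a ∉ s) :
    eSwapSum n G (insert a s) = eSwapSum n G s + (2 : ℂ) • ∑ b ∈ s, eSwap n G b a + 1 := by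
  simp only [eSwapSum, Finset.sum_insert ha, eSwap_self, Finset.sum_add_distrib]
  simp only [eSwap_comm a, two_smul]
  abel

end Wreath

namespace JucysMurphy

open Wreath MonoidAlgebra SemidirectProduct

variable {n : ℕ}

variable (n) in
def indicesBelow (m : ℕ) : Finset (Fin n) := {a | a.val < m}

theorem indicesBelow_succ {k : ℕ} (hk : k < n) :
    indicesBelow n (k + 1) = insert ⟨k, hk⟩ (indicesBelow n k) := by
  ext a
  simp only [indicesBelow, Finset.mem_filter, Finset.mem_univ, true_and, Finset.mem_insert,
    Fin.ext_iff]
  omega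

theorem notMem_indicesBelow_self {k : ℕ} (hk : k < n) :
    (⟨k, hk⟩ : Fin n) ∉ indicesBelow n k := by
  simp [indicesBelow]

variable {G : Type} [Group G]

theorem sE_eq_of {k : ℕ} (hk : k + 1 < n) :
    sE n G k = of ℂ _ (inr (Equiv.swap ⟨k, k.lt_succ_self.trans hk⟩ ⟨k + 1, hk⟩)) :=
  dif_pos hk

variable [Fintype G]

theorem eSwapSum_indicesBelow_commute (m m' : ℕ) :
    Commute (eSwapSum n G (indicesBelow n m)) (eSwapSum n G (indicesBelow n m')) := by
  have hmono : Monotone (indicesBelow n) := fun _ _ hle _ => by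
    simpa [indicesBelow] using (Nat.lt_of_lt_of_le · hle)
  rcases le_total m m' with hle | hle
  · exact eSwapSum_commute_of_subset (hmono hle)
  · exact (eSwapSum_commute_of_subset (hmono hle)).symm

theorem sE_mul_eSwap_mul_sE {k : ℕ} (hk : k + 1 < n) (a b : Fin n) :
    sE n G k * eSwap n G a b * sE n G k =
      eSwap n G (Equiv.swap ⟨k, k.lt_succ_self.trans hk⟩ ⟨k + 1, hk⟩ a)
        (Equiv.swap ⟨k, k.lt_succ_self.trans hk⟩ ⟨k + 1, hk⟩ b) := by
  rw [sE_eq_of hk, of_mul_eSwap, mul_assoc, ← map_mul, ← inr.map_mul, Equiv.swap_mul_self,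
    map_one, map_one, mul_one]
  rfl

theorem eE_mul_sE {k : ℕ} (hk : k + 1 < n) :
    eE n G k (k + 1) * sE n G k = eSwap n G ⟨k, k.lt_succ_self.trans hk⟩ ⟨k + 1, hk⟩ := by
  rw [eE, dif_pos ⟨k.lt_succ_self.trans hk, hk⟩, sE_eq_of hk, eSwap, smul_mul_assoc,
    Finset.sum_mul]
  simp only [← map_mul]
  rfl

theorem eq_sum_eSwap (J : ℕ → MonoidAlgebra ℂ (Wreath n G)) (h0 : J 0 = 0)
    (hrec : ∀ i : ℕ, i + 1 < n →
      J (i + 1) = sE n G i * J i * sE n G i + eE n G i (i + 1) * sE n G i) :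
    ∀ k (hk : k < n), J k = ∑ a ∈ indicesBelow n k, eSwap n G a ⟨k, hk⟩ := by
  intro k
  induction k with
  | zero => intro _; simp [h0, indicesBelow]
  | succ k ih =>
    intro hk
    have hkn : k < n := k.lt_succ_self.trans hk
    rw [hrec k hk, ih hkn, Finset.mul_sum, Finset.sum_mul, indicesBelow_succ hkn,
      Finset.sum_insert (notMem_indicesBelow_self hkn), eE_mul_sE hk, add_comm]
    refine congrArg _ (Finset.sum_congr rfl fun a ha => ?_)
    have ha : a.val < k := by simpa [indicesBelow] using ha
    rw [sE_mul_eSwap_mul_sE hk, Equiv.swap_apply_left,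
      Equiv.swap_apply_of_ne_of_ne (by simp [Fin.ext_iff]; omega) (by simp [Fin.ext_iff]; omega)]

theorem two_smul_eq_eSwapSum_sub (J : ℕ → MonoidAlgebra ℂ (Wreath n G)) (h0 : J 0 = 0)
    (hrec : ∀ i : ℕ, i + 1 < n →
      J (i + 1) = sE n G i * J i * sE n G i + eE n G i (i + 1) * sE n G i)
    {k : ℕ} (hk : k < n) :
    (2 : ℂ) • J k =
      eSwapSum n G (indicesBelow n (k + 1)) - eSwapSum n G (indicesBelow n k) - 1 := by
  rw [indicesBelow_succ hk, eSwapSum_insert (notMem_indicesBelow_self hk),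
    eq_sum_eSwap J h0 hrec k hk]
  abel

end JucysMurphy

theorem jucysMurphy_commute_general (n : ℕ) (G : Type) [Group G] [Fintype G]
    (J : ℕ → MonoidAlgebra ℂ (Wreath n G))
    (h0 : J 0 = 0)
    (hrec : ∀ i : ℕ, i + 1 < n →
      J (i + 1) = sE n G i * J i * sE n G i + eE n G i (i + 1) * sE n G i) :
    ∀ k l : ℕ, k < n → l < n → J k * J l = J l * J k := by
  intro k l hk hl
  let T (m : ℕ) := Wreath.eSwapSum n G (JucysMurphy.indicesBelow n m)
  let A := Algebra.adjoin ℂ (Set.range T)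
  have : IsMulCommutative A := Algebra.isMulCommutative_adjoin ℂ <| by
    rintro _ ⟨m, rfl⟩ _ ⟨m', rfl⟩
    exact (JucysMurphy.eSwapSum_indicesBelow_commute m m').eq
  have hJ : ∀ k < n, J k ∈ A := fun k hk => by
    have hT : ∀ m, T m ∈ A := fun m => Algebra.subset_adjoin ⟨m, rfl⟩
    rw [← inv_smul_smul₀ (two_ne_zero' ℂ) (J k),
      JucysMurphy.two_smul_eq_eSwapSum_sub J h0 hrec hk]
    exact A.smul_mem (A.sub_mem (A.sub_mem (hT _) (hT _)) A.one_mem) _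
  exact setLike_mul_comm (hJ k hk) (hJ l hl)

/-- The Jucys–Murphy elements of `ℂG̃_n`, defined by `j̃_1 = 0` and
`j̃_{i+1} = s_i j̃_i s_i + e_{i,i+1} s_i` (here 0-based: `J k = j̃_{k+1}`), pairwise
commute. -/
theorem jucysMurphy_commute (n : ℕ) (G : Type) [Group G] [Fintype G]
    (J : ℕ → MonoidAlgebra ℂ (Wreath n G)) (hn : 0 < n)
    (h0 : J 0 = 0)
    (hrec : ∀ i : ℕ, i + 1 < n →
      J (i + 1) = sE n G i * J i * sE n G i + eE n G i (i + 1) * sE n G i) :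
    ∀ k l : ℕ, k < n → l < n → J k * J l = J l * J k :=
  jucysMurphy_commute_general n G J h0 hrec
end

section
/- For l = 1,...,n−1, in ℂG̃_n one has j̃_l s_l s_{l+1} ⋯ s_{n−1} = s_l s_{l+1} ⋯ s_{n−1} j̃_n − Σ_{k=l}^{n−1} (s_l s_{l+1} ⋯ ŝ_k ⋯ s_{n−1}) e_{k,n}, where s_l ⋯ ŝ_k ⋯ s_{n−1} denotes the product s_l s_{l+1} ⋯ s_{n−1} with the factor s_k omitted. -/
/-! The recursion for `j̃`, `s_q² = 1` and `s_q e_{q,q+1} = e_{q,q+1} s_q` give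
`j̃_q s_q = s_q j̃_{q+1} - e_{q,q+1}`, while `e_{i,q} s_q = s_q e_{i,q+1}` for `i < q`.
Pushing `j̃_l` through `s_l ⋯ s_{n-1}` one factor at a time thus leaves one correction
`e_{k,k+1}` per factor `s_k`, and pushing that correction through the remaining factors
`s_{k+1} ⋯ s_{n-1}` turns it into `e_{k,n}`. -/

section ConsecProd

variable {R : Type*} [Ring R] (s : ℕ → R)

def consecProd (p m : ℕ) : R := ((List.range m).map fun u => s (p + u)).prod

def consecProdOmit (p m t : ℕ) : R :=
  ((List.range m).map fun u => if u = t then 1 else s (p + u)).prod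

theorem consecProd_succ (p m : ℕ) : consecProd s p (m + 1) = s p * consecProd s (p + 1) m := by
  simp only [consecProd, List.prod_range_succ', add_zero, add_assoc, add_comm 1]

theorem consecProdOmit_succ_zero (p m : ℕ) :
    consecProdOmit s p (m + 1) 0 = consecProd s (p + 1) m := by
  simp only [consecProdOmit, consecProd, List.prod_range_succ', if_pos, Nat.succ_ne_zero,
    if_false, one_mul, add_assoc, add_comm 1]

theorem consecProdOmit_succ_succ (p m t : ℕ) :
    consecProdOmit s p (m + 1) (t + 1) = s p * consecProdOmit s (p + 1) m t := by
  simp only [consecProdOmit, List.prod_range_succ', Nat.succ_inj, add_zero, add_assoc,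
    add_comm 1, (Nat.succ_ne_zero t).symm, if_false]

theorem mul_consecProd_of_mul_eq (x : ℕ → R) {p m : ℕ}
    (h : ∀ q, p ≤ q → q < p + m → x q * s q = s q * x (q + 1)) :
    x p * consecProd s p m = consecProd s p m * x (p + m) := by
  induction m generalizing p with
  | zero => simp [consecProd]
  | succ m ih =>
    have htail := ih (p := p + 1) fun q hpq hqm => h q (by omega) (by omega)
    rw [consecProd_succ, ← mul_assoc, h p le_rfl (by omega), mul_assoc, htail, mul_assoc,
      add_right_comm, add_assoc]

theorem mul_consecProd_eq_sub_sum (J : ℕ → R) (e : ℕ → ℕ → R) {N : ℕ}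
    (hJ : ∀ q < N, s q * J (q + 1) = J q * s q + e q (q + 1))
    (he : ∀ i q, i < q → q < N → e i q * s q = s q * e i (q + 1)) {p m : ℕ} (hpm : p + m = N) :
    J p * consecProd s p m = consecProd s p m * J N -
      ∑ t ∈ Finset.range m, consecProdOmit s p m t * e (p + t) N := by
  induction m generalizing p with
  | zero => simp [consecProd, ← hpm]
  | succ m ih =>
    have hJp : J p * s p = s p * J (p + 1) - e p (p + 1) := by
      rw [hJ p (by omega), add_sub_cancel_right]
    have hep : e p (p + 1) * consecProd s (p + 1) m = consecProd s (p + 1) m * e p N := by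
      rw [mul_consecProd_of_mul_eq s (e p) fun q hpq hqm => he p q (by omega) (by omega)]
      rw [← hpm, add_right_comm, add_assoc]
    rw [consecProd_succ, ← mul_assoc, hJp, sub_mul, mul_assoc, ih (by omega), hep,
      Finset.sum_range_succ', consecProdOmit_succ_zero, add_zero]
    simp only [consecProdOmit_succ_succ, mul_assoc, ← Finset.mul_sum, mul_sub]
    simp only [add_assoc, add_comm 1]
    abel

end ConsecProd

section WreathRelations

open SemidirectProduct

variable {n : ℕ} {G : Type} [Group G]

theorem Wreath.inl_mul_inr (f : Fin n → G) (σ : Equiv.Perm (Fin n)) :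
    (inl f : Wreath n G) * inr σ = inr σ * inl (f ∘ σ) := by
  have hf : permHom n G σ (f ∘ σ) = f := funext fun x => congrArg f (σ.apply_symm_apply x)
  rw [← eq_mul_inv_iff_mul_eq, ← map_inv, ← inl_aut, hf]

theorem sE_mul_self (a : ℕ) : sE n G a * sE n G a = 1 := by
  unfold sE
  split_ifs
  · rw [← map_mul, ← map_mul, Equiv.swap_mul_self, map_one, map_one]
  · rw [one_mul]

variable [Fintype G]

theorem eE_comm (i j : ℕ) : eE n G i j = eE n G j i := by
  by_cases h : i < n ∧ j < n
  · rw [eE, eE, dif_pos h, dif_pos h.symm]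
    congr 1
    rw [← Equiv.sum_comp (Equiv.inv G)]
    refine Finset.sum_congr rfl fun g _ => ?_
    rw [Equiv.inv_apply, inv_inv]
    by_cases hij : i = j
    · subst hij
      rw [← Pi.mulSingle_mul, ← Pi.mulSingle_mul, mul_inv_cancel, inv_mul_cancel]
    · rw [(Pi.mulSingle_commute (Fin.ne_of_val_ne hij) _ _).eq]
  · rw [eE, eE, dif_neg h, dif_neg (h ∘ And.symm)]

theorem eE_mul_of_inr (i j : Fin n) (σ : Equiv.Perm (Fin n)) :
    eE n G i j * MonoidAlgebra.of ℂ (Wreath n G) (inr σ) =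
      MonoidAlgebra.of ℂ (Wreath n G) (inr σ) * eE n G (σ⁻¹ i) (σ⁻¹ j) := by
  simp only [eE, i.2, j.2, (σ⁻¹ i).2, (σ⁻¹ j).2, and_self, dif_pos, Fin.eta, smul_mul_assoc,
    mul_smul_comm, Finset.sum_mul, Finset.mul_sum, ← map_mul, Wreath.inl_mul_inr, Pi.mul_comp,
    Pi.mulSingle_comp_equiv]
  rfl

theorem eE_mul_sE_of_lt {i k : ℕ} (hik : i < k) (hk : k + 1 < n) :
    eE n G i k * sE n G k = sE n G k * eE n G i (k + 1) := by
  have h := eE_mul_of_inr (G := G) ⟨i, by omega⟩ ⟨k, by omega⟩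
    (Equiv.swap ⟨k, by omega⟩ ⟨k + 1, hk⟩)
  rw [Equiv.swap_inv, Equiv.swap_apply_left, Equiv.swap_apply_of_ne_of_ne
    (Fin.ne_of_val_ne hik.ne) (Fin.ne_of_val_ne (show i ≠ k + 1 by omega))] at h
  rw [sE, dif_pos hk]
  exact h

theorem sE_mul_eE_succ {k : ℕ} (hk : k + 1 < n) :
    sE n G k * eE n G k (k + 1) = eE n G k (k + 1) * sE n G k := by
  have h := eE_mul_of_inr (G := G) ⟨k, by omega⟩ ⟨k + 1, hk⟩
    (Equiv.swap ⟨k, by omega⟩ ⟨k + 1, hk⟩)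
  rw [Equiv.swap_inv, Equiv.swap_apply_left, Equiv.swap_apply_right] at h
  rw [sE, dif_pos hk, h, eE_comm]

end WreathRelations

/-- Indices are 0-based: `J p = j̃_{p+1}`, `sE n G q = s_{q+1}`, `eE n G i j = e_{i+1,j+1}`. -/
theorem jucysMurphy_prod_formula_general (n : ℕ) (G : Type) [Group G] [Fintype G]
    (J : ℕ → MonoidAlgebra ℂ (Wreath n G))
    (hrec : ∀ i : ℕ, i + 1 < n →
      J (i + 1) = sE n G i * J i * sE n G i + eE n G i (i + 1) * sE n G i)
    (p : ℕ) (hp : p + 1 < n) :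
    J p * ((List.range (n - 1 - p)).map (fun u => sE n G (p + u))).prod =
      ((List.range (n - 1 - p)).map (fun u => sE n G (p + u))).prod * J (n - 1) -
        ∑ t ∈ Finset.range (n - 1 - p),
          ((List.range (n - 1 - p)).map (fun u => if u = t then 1 else sE n G (p + u))).prod *
            eE n G (p + t) (n - 1) := by
  have hJ : ∀ q < n - 1, sE n G q * J (q + 1) = J q * sE n G q + eE n G q (q + 1) := by
    intro q hq
    rw [hrec q (by omega), mul_add, ← mul_assoc, ← mul_assoc, sE_mul_self, one_mul,
      ← mul_assoc, sE_mul_eE_succ (by omega), mul_assoc, sE_mul_self, mul_one]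
  exact mul_consecProd_eq_sub_sum (sE n G) J (eE n G) hJ
    (fun _ _ hiq hq => eE_mul_sE_of_lt hiq (by omega)) (by omega : p + (n - 1 - p) = n - 1)

/-- For the Jucys–Murphy elements of `ℂG̃_n` (0-based: `J p = j̃_{p+1}`), for
`p + 1 < n` one has
`j̃_{p+1} s_{p+1} ⋯ s_{n−1} = s_{p+1} ⋯ s_{n−1} j̃_n − Σ_k (s_{p+1} ⋯ ŝ_k ⋯ s_{n−1}) e_{k,n}`
(paper's 1-based formula for `l = p+1`), where the hat means the factor is omitted. -/
theorem jucysMurphy_prod_formula (n : ℕ) (G : Type) [Group G] [Fintype G]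
    (J : ℕ → MonoidAlgebra ℂ (Wreath n G)) (hn : 0 < n)
    (h0 : J 0 = 0)
    (hrec : ∀ i : ℕ, i + 1 < n →
      J (i + 1) = sE n G i * J i * sE n G i + eE n G i (i + 1) * sE n G i)
    (p : ℕ) (hp : p + 1 < n) :
    J p * ((List.range (n - 1 - p)).map (fun u => sE n G (p + u))).prod =
      ((List.range (n - 1 - p)).map (fun u => sE n G (p + u))).prod * J (n - 1) -
        ∑ t ∈ Finset.range (n - 1 - p),
          ((List.range (n - 1 - p)).map (fun u => if u = t then 1 else sE n G (p + u))).prod *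
            eE n G (p + t) (n - 1) :=
  jucysMurphy_prod_formula_general n G J hrec p hp
end

section
/- The Baxterized elements s_i(c,c') := s_i + e_{i,i+1}/(c−c') of ℂG̃_n satisfy the Yang–Baxter equation with spectral parameters: s_i(c,c') s_{i+1}(c,c'') s_i(c',c'') = s_{i+1}(c',c'') s_i(c,c'') s_{i+1}(c,c') for i = 1,...,n−2 and pairwise distinct complex numbers c, c', c''. -/
/-- The Baxterized element `s_a(c,c') = s_a + e_{a,a+1}/(c−c')` of `ℂG̃_n`. -/
noncomputable def sBax (n : ℕ) (G : Type) [Group G] [Fintype G] (a : ℕ) (c c' : ℂ) :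
    MonoidAlgebra ℂ (Wreath n G) :=
  sE n G a + (c - c')⁻¹ • eE n G a (a + 1)

/-! Expanding both sides, the eight monomials in `s = s_i`, `t = s_{i+1}`, `e = e_{i,i+1}`,
`f = e_{i+1,i+2}` cancel in pairs by braid-type relations, except for
`(xy + yz - xz) • (efs - ete)`, where `x, y, z` are the inverse differences of the spectral
parameters; and `xy + yz = xz` is the partial-fraction identity
`1/((c-c')(c-c'')) + 1/((c-c'')(c'-c'')) = 1/((c-c')(c'-c''))`.

The relations come from two facts in `ℂG̃_n`: a permutation `σ` conjugates `e_{jk}` into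
`e_{σj,σk}`, and for distinct `i, j, k` both `e_{ij} e_{jk}` and `e_{ik} e_{ij}` are the average of
`x_i y_j z_k` over `xyz = 1`. -/

open Equiv SemidirectProduct MonoidAlgebra

section YangBaxter

variable {R A : Type*} [CommRing R] [Ring A] [Algebra R A] {s t e f : A}

theorem yangBaxter_of_relations (x y z : R) (hxyz : x * y + y * z = x * z)
    (hbraid : s * t * s = t * s * t) (hste : s * t * e = f * s * t)
    (hets : e * t * s = t * s * f) (hsfs : s * f * s = t * e * t)
    (hsfe : s * f * e = e * f * s) (hfsf : f * s * f = e * f * s)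
    (htef : t * e * f = e * t * e) (hfet : f * e * t = e * t * e)
    (hefe : e * f * e = f * e * f) :
    (s + x • e) * (t + y • f) * (s + z • e) = (t + z • f) * (s + y • e) * (t + x • f) := by
  simp only [add_mul, mul_add, smul_mul_assoc, mul_smul_comm]
  rw [hbraid, hste, hets, hsfs, hsfe, hefe, hfsf, htef, hfet]
  linear_combination (norm := module) hxyz • (e * f * s - e * t * e)

theorem yangBaxter_of_conjugation_relations {d : A} (x y z : R) (hxyz : x * y + y * z = x * z)
    (hs : s * s = 1) (ht : t * t = 1) (hbraid : s * t * s = t * s * t)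
    (hse : s * e = e * s) (htf : t * f = f * t) (hsf : s * f = d * s) (hte : t * e = d * t)
    (hef : e * f = d * e) (hfd : f * d = d * e) (hfe : f * e = e * d) (hdf : d * f = e * d) :
    (s + x • e) * (t + y • f) * (s + z • e) = (t + z • f) * (s + y • e) * (t + x • f) := by
  have hsd : s * d = f * s := by
    calc s * d = s * (d * s) * s := by rw [mul_assoc, mul_assoc, hs, mul_one]
      _ = f * s := by rw [← hsf, ← mul_assoc, hs, one_mul]
  have htd : t * d = e * t := by
    calc t * d = t * (d * t) * t := by rw [mul_assoc, mul_assoc, ht, mul_one]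
      _ = e * t := by rw [← hte, ← mul_assoc, ht, one_mul]
  refine yangBaxter_of_relations x y z hxyz hbraid ?_ ?_ ?_ ?_ ?_ ?_ ?_ ?_
  · rw [mul_assoc, hte, ← mul_assoc, hsd]
  · rw [← htd, mul_assoc, ← hsf, mul_assoc]
  · rw [hsf, mul_assoc, hs, hte, mul_assoc, ht, mul_one]
  · rw [hsf, mul_assoc, hse, ← mul_assoc, ← hef]
  · rw [mul_assoc, hsf, ← mul_assoc, hfd, ← hef]
  · rw [hte, mul_assoc d, htf, ← mul_assoc, hdf, mul_assoc e t, hte, mul_assoc]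
  · rw [hfe, mul_assoc e t, hte, mul_assoc]
  · rw [hef, mul_assoc f, hef, ← mul_assoc, hfd]

end YangBaxter

theorem permHom_mulSingle {n : ℕ} {G : Type} [Group G] (σ : Perm (Fin n)) (i : Fin n) (g : G) :
    permHom n G σ (Pi.mulSingle i g) = Pi.mulSingle (σ i) g := by
  funext l
  simp [permHom, Equiv.arrowCongr, Pi.mulSingle_apply, Equiv.symm_apply_eq]

namespace Wreath

variable {n : ℕ} (G : Type) [Group G]

noncomputable def ofPerm (σ : Perm (Fin n)) : MonoidAlgebra ℂ (Wreath n G) :=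
  of ℂ (Wreath n G) (inr σ)

noncomputable def e [Fintype G] (i j : Fin n) : MonoidAlgebra ℂ (Wreath n G) :=
  (Fintype.card G : ℂ)⁻¹ •
    ∑ g : G, of ℂ (Wreath n G) (inl (Pi.mulSingle i g * Pi.mulSingle j g⁻¹))

variable {G}

theorem ofPerm_mul_ofPerm (σ τ : Perm (Fin n)) : ofPerm G σ * ofPerm G τ = ofPerm G (σ * τ) := by
  simp only [ofPerm, ← map_mul]

theorem ofPerm_swap_mul_self (i j : Fin n) : ofPerm G (swap i j) * ofPerm G (swap i j) = 1 := by
  rw [ofPerm_mul_ofPerm, swap_mul_self, ofPerm, map_one, map_one]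

theorem ofPerm_braid {i j k : Fin n} (hij : i ≠ j) (hjk : j ≠ k) (hik : i ≠ k) :
    ofPerm G (swap i j) * ofPerm G (swap j k) * ofPerm G (swap i j) =
      ofPerm G (swap j k) * ofPerm G (swap i j) * ofPerm G (swap j k) := by
  simp only [ofPerm_mul_ofPerm]
  rw [swap_mul_swap_mul_swap hij hik, swap_comm i j, swap_comm j k,
    swap_mul_swap_mul_swap hjk.symm hik.symm, swap_comm]

theorem inr_mul_inl (σ : Perm (Fin n)) (v : Fin n → G) :
    (inr σ * inl v : Wreath n G) = inl (permHom n G σ v) * inr σ := by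
  rw [inl_aut, mul_assoc _ (inr σ⁻¹), ← map_mul, inv_mul_cancel, map_one, mul_one]

theorem mulSingle_mul_mulSingle_triple {i j k : Fin n} (hij : i ≠ j) (hjk : j ≠ k) (hik : i ≠ k)
    (g h : G) :
    (Pi.mulSingle i g * Pi.mulSingle j g⁻¹ * (Pi.mulSingle j h * Pi.mulSingle k h⁻¹) : Fin n → G) =
      Pi.mulSingle i h * Pi.mulSingle k h⁻¹ *
        (Pi.mulSingle i (h⁻¹ * g) * Pi.mulSingle j (h⁻¹ * g)⁻¹) := by
  funext l
  simp only [Pi.mul_apply, Pi.mulSingle_apply]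
  split_ifs <;> subst_vars <;> simp_all

variable [Fintype G]

theorem ofPerm_mul_e (σ : Perm (Fin n)) (i j : Fin n) :
    ofPerm G σ * e G i j = e G (σ i) (σ j) * ofPerm G σ := by
  simp only [ofPerm, e, mul_smul_comm, smul_mul_assoc, Finset.mul_sum, Finset.sum_mul, ← map_mul,
    inr_mul_inl]
  congr 1
  refine Finset.sum_congr rfl fun g _ => ?_
  rw [map_mul (permHom n G σ), permHom_mulSingle, permHom_mulSingle]

theorem e_comm (i j : Fin n) : e G i j = e G j i := by
  obtain rfl | hij := eq_or_ne i j
  · rfl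
  simp only [e]
  congr 1
  refine Fintype.sum_equiv (Equiv.inv G) _ _ fun g => ?_
  rw [Equiv.inv_apply, inv_inv, (Pi.mulSingle_commute hij _ _).eq]

theorem e_mul_e {i j k : Fin n} (hij : i ≠ j) (hjk : j ≠ k) (hik : i ≠ k) :
    e G i j * e G j k = e G i k * e G i j := by
  simp only [e, smul_mul_smul_comm, Finset.sum_mul_sum, ← map_mul,
    mulSingle_mul_mulSingle_triple hij hjk hik]
  congr 1
  rw [Finset.sum_comm]
  refine Finset.sum_congr rfl fun h _ => Fintype.sum_equiv (Equiv.mulLeft h⁻¹) _ _ fun g => rfl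

theorem ofPerm_swap_mul_e_self (i j : Fin n) :
    ofPerm G (swap i j) * e G i j = e G i j * ofPerm G (swap i j) := by
  rw [ofPerm_mul_e, swap_apply_left, swap_apply_right, e_comm]

theorem ofPerm_swap_mul_e_of_ne {i j k : Fin n} (hki : k ≠ i) (hkj : k ≠ j) :
    ofPerm G (swap i j) * e G j k = e G i k * ofPerm G (swap i j) := by
  rw [ofPerm_mul_e, swap_apply_right, swap_apply_of_ne_of_ne hki hkj]

theorem yangBaxter {i j k : Fin n} (hij : i ≠ j) (hjk : j ≠ k) (hik : i ≠ k) (x y z : ℂ)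
    (hxyz : x * y + y * z = x * z) :
    (ofPerm G (swap i j) + x • e G i j) * (ofPerm G (swap j k) + y • e G j k) *
        (ofPerm G (swap i j) + z • e G i j) =
      (ofPerm G (swap j k) + z • e G j k) * (ofPerm G (swap i j) + y • e G i j) *
        (ofPerm G (swap j k) + x • e G j k) := by
  refine yangBaxter_of_conjugation_relations (d := e G i k) x y z hxyz (ofPerm_swap_mul_self i j)
    (ofPerm_swap_mul_self j k) (ofPerm_braid hij hjk hik) (ofPerm_swap_mul_e_self i j)
    (ofPerm_swap_mul_e_self j k) (ofPerm_swap_mul_e_of_ne hik.symm hjk.symm) ?_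
    (e_mul_e hij hjk hik) ?_ ?_ ?_
  · rw [e_comm i j, swap_comm j k, ofPerm_swap_mul_e_of_ne hik hij, e_comm k i]
  · rw [e_comm j k, e_comm i k, ← e_mul_e hik.symm hij hjk.symm]
  · rw [e_comm i j]
    exact (e_mul_e hij.symm hik hjk).symm
  · rw [e_comm j k]
    exact e_mul_e hik hjk.symm hij

end Wreath

theorem sBax_eq {n : ℕ} {G : Type} [Group G] [Fintype G] {a : ℕ} (h : a + 1 < n) (c c' : ℂ) :
    sBax n G a c c' = Wreath.ofPerm G (swap ⟨a, a.lt_succ_self.trans h⟩ ⟨a + 1, h⟩) +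
      (c - c')⁻¹ • Wreath.e G ⟨a, a.lt_succ_self.trans h⟩ ⟨a + 1, h⟩ := by
  rw [sBax, sE, eE, dif_pos h, dif_pos ⟨a.lt_succ_self.trans h, h⟩]
  rfl

/-- The Baxterized elements `s_i(c,c') = s_i + e_{i,i+1}/(c−c')` of `ℂG̃_n` satisfy the
Yang–Baxter equation with spectral parameters:
`s_i(c,c') s_{i+1}(c,c'') s_i(c',c'') = s_{i+1}(c',c'') s_i(c,c'') s_{i+1}(c,c')`. -/
theorem baxterized_yang_baxter (n : ℕ) (G : Type) [Group G] [Fintype G]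
    (a : ℕ) (ha : a + 2 < n) (c c' c'' : ℂ)
    (h1 : c ≠ c') (h2 : c ≠ c'') (h3 : c' ≠ c'') :
    sBax n G a c c' * sBax n G (a + 1) c c'' * sBax n G a c' c'' =
      sBax n G (a + 1) c' c'' * sBax n G a c c'' * sBax n G (a + 1) c c' := by
  have h : a + 1 < n := by omega
  simp only [sBax_eq h, sBax_eq (a := a + 1) ha]
  refine Wreath.yangBaxter (by simp) (by simp) (by simp [add_assoc]) _ _ _ ?_
  have := sub_ne_zero.2 h1
  have := sub_ne_zero.2 h2
  have := sub_ne_zero.2 h3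
  field_simp
  ring
end

section
/- Let T be a standard m-tableau of shape λ (an m-partition of size N ≥ 1), with contents c_i := c(T|i) and positions p_i := p(T|i), and let μ be the shape of the m-tableau obtained from T by removing the node containing N. Then the rational function F_T(u) := ((u − c_N)/u) · ∏_{i=1}^{N−1} (u − c_i)^2 / ((u − c_i)^2 − δ_{p_i, p_N}) is non-singular at u = c_N, and its value there equals F_μ / F_λ, where F_λ denotes the product of the hook lengths of all nodes of the m-partition λ (and similarly F_μ). -/
noncomputable section

/-- The hook length of a cell `x` in a (finite) Young diagram `F ⊆ ℕ × ℕ`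
(cells as `(row, column)` pairs): the number of cells of `F` in the same row, weakly to
the right of `x`, plus the number of cells of `F` in the same column, strictly below `x`. -/
def hookLength (F : Finset (ℕ × ℕ)) (x : ℕ × ℕ) : ℕ :=
  (F.filter (fun y => y.1 = x.1 ∧ x.2 ≤ y.2)).card +
    (F.filter (fun y => y.2 = x.2 ∧ x.1 < y.1)).card

variable {m n : ℕ}

/-- The `k`-th diagram of the shape of the `m`-tableau `T` (a node is a pair
`((row, column), position)`). -/
def shapeOf (T : Fin (n + 1) → (ℕ × ℕ) × Fin m) (k : Fin m) : Finset (ℕ × ℕ) :=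
  (Finset.univ.filter (fun i : Fin (n + 1) => (T i).2 = k)).image (fun i => (T i).1)

/-- The `k`-th diagram of the shape `μ` obtained by removing the node containing the last
entry of `T`. -/
def shapeOfErase (T : Fin (n + 1) → (ℕ × ℕ) × Fin m) (k : Fin m) : Finset (ℕ × ℕ) :=
  ((Finset.univ.erase (Fin.last n)).filter (fun i : Fin (n + 1) => (T i).2 = k)).image
    (fun i => (T i).1)

/-- The classical content `c(T|i) = column − row` of the node of `T` numbered `i`. -/
def contentOf (T : Fin (n + 1) → (ℕ × ℕ) × Fin m) (i : Fin (n + 1)) : ℂ :=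
  ((T i).1.2 : ℂ) - ((T i).1.1 : ℂ)

/-!
Only the diagram containing `N` matters: the factors with `p_i ≠ p_N` equal `1`, and every other
diagram contributes the same hook lengths to `F_μ` and `F_λ`. On one Young diagram `μ` whose rows
`i < k` have lengths `ℓ_i`, the product `∏ (u - c)² / ((u - c)² - 1)` over its cells telescopes
along each row, giving `u / (u + k) · ∏_{i<k} (u - γ_i + 1) / (u - γ_i)` with `γ_i = ℓ_i - i` the
content of the cell just right of row `i`. If `λ` is `μ` plus the cell `(r, s)`, then `γ_r = c_N`,
so the factor `u - c_N` cancels the only pole at `c_N` (the `γ_i` are strictly decreasing). At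
`u = c_N` the factors with `i < r` are `h / (h + 1)` for the hooks `h` of `μ` in column `s`, while
for `i > r` the numbers `c_N - γ_i`, together with the hooks of `μ` in row `r`, are exactly
`1, …, s + k - 1 - r`; this gives `F_μ / F_λ`.
-/

open Finset Filter Topology

namespace Finset

theorem prod_range_div_of_ne_zero {K : Type*} [CommGroupWithZero K] (f : ℕ → K)
    (hf : ∀ i, f i ≠ 0) (n : ℕ) : ∏ i ∈ range n, f (i + 1) / f i = f n / f 0 := by
  simpa using congrArg Units.val (prod_range_div (fun i => Units.mk0 (f i) (hf i)) n)

theorem prod_range_div_of_ne_zero' {K : Type*} [CommGroupWithZero K] (f : ℕ → K)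
    (hf : ∀ i, f i ≠ 0) (n : ℕ) : ∏ i ∈ range n, f i / f (i + 1) = f 0 / f n := by
  simpa using congrArg Units.val (prod_range_div' (fun i => Units.mk0 (f i) (hf i)) n)

end Finset

theorem prod_range_sq_div_sq_sub_one {K : Type*} [Field K] {v : K} (hv : ∀ z : ℤ, v ≠ z)
    (l : ℕ) :
    ∏ t ∈ range l, (v - t) ^ 2 / ((v - t) ^ 2 - 1) = v / (v + 1) * ((v - l + 1) / (v - l)) := by
  have hv' (z : ℤ) : v - z ≠ 0 := sub_ne_zero.2 (hv z)
  have hfactor (t : ℕ) : (v - t) ^ 2 / ((v - t) ^ 2 - 1) =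
      (v - t) / (v - (t + 1 : ℕ)) * ((v + 1 - (t + 1 : ℕ)) / (v + 1 - t)) := by
    rw [div_mul_div_comm]
    push_cast
    congr 1 <;> ring
  rw [prod_congr rfl fun t _ => hfactor t, prod_mul_distrib,
    prod_range_div_of_ne_zero' (fun t : ℕ => v - t) (fun t => by exact_mod_cast hv' t),
    prod_range_div_of_ne_zero (fun t : ℕ => v + 1 - t)
      (fun t => by simpa [sub_sub_eq_add_sub] using hv' ((t : ℤ) - 1))]
  push_cast
  rw [div_mul_div_comm, div_mul_div_comm]
  congr 1 <;> ring

theorem eventually_nhdsNE_ne_intCast (z : ℤ) : ∀ᶠ u : ℂ in 𝓝[≠] (z : ℂ), ∀ t : ℤ, u ≠ t := by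
  filter_upwards [nhdsWithin_le_nhds (Metric.ball_mem_nhds (z : ℂ) one_pos),
    self_mem_nhdsWithin] with u hball hne t rfl
  rw [Metric.mem_ball, Complex.isometry_intCast.dist_eq] at hball
  exact hball.not_ge (Int.pairwise_one_le_dist fun h => hne (congrArg _ h))

theorem hookLength_pos {F : Finset (ℕ × ℕ)} {x : ℕ × ℕ} (hx : x ∈ F) : 0 < hookLength F x :=
  Nat.add_pos_left (card_pos.2 ⟨x, mem_filter.2 ⟨hx, rfl, le_rfl⟩⟩) _

namespace YoungDiagram

def content (x : ℕ × ℕ) : ℤ := x.2 - x.1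

section

variable (μ : YoungDiagram)

theorem hookLength_add_add_add_one {i j : ℕ} (h : (i, j) ∈ μ) :
    hookLength μ.cells (i, j) + i + j + 1 = μ.rowLen i + μ.colLen j := by
  have arm : μ.cells.filter (fun y => y.1 = i ∧ j ≤ y.2) = {i} ×ˢ Ico j (μ.rowLen i) := by
    ext ⟨a, b⟩
    simp only [mem_filter, mem_cells, mem_product, mem_singleton, mem_Ico]
    constructor
    · rintro ⟨hab, rfl, hjb⟩
      exact ⟨rfl, hjb, mem_iff_lt_rowLen.1 hab⟩
    · rintro ⟨rfl, hjb, hb⟩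
      exact ⟨mem_iff_lt_rowLen.2 hb, rfl, hjb⟩
  have leg : μ.cells.filter (fun y => y.2 = j ∧ i < y.1) = Ioo i (μ.colLen j) ×ˢ {j} := by
    ext ⟨a, b⟩
    simp only [mem_filter, mem_cells, mem_product, mem_singleton, mem_Ioo]
    constructor
    · rintro ⟨hab, rfl, hia⟩
      exact ⟨⟨hia, mem_iff_lt_colLen.1 hab⟩, rfl⟩
    · rintro ⟨⟨hia, ha⟩, rfl⟩
      exact ⟨mem_iff_lt_colLen.2 ha, rfl, hia⟩
  have hj := mem_iff_lt_rowLen.1 h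
  have hi := mem_iff_lt_colLen.1 h
  rw [hookLength, arm, leg, card_product, card_product, card_singleton, card_singleton,
    Nat.card_Ico, Nat.card_Ioo]
  omega

theorem rowLen_eq_of_forall_mem_iff {i a : ℕ} (h : ∀ j, (i, j) ∈ μ ↔ j < a) : μ.rowLen i = a :=
  eq_of_forall_lt_iff fun j => by rw [← mem_iff_lt_rowLen, h]

theorem strictAnti_content_rowLen : StrictAnti fun i => content (i, μ.rowLen i) :=
  strictAnti_nat_of_succ_lt fun i => by
    have := μ.rowLen_anti i (i + 1) i.le_succ
    simp only [content]
    omega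

/-- The hook lengths in row `r` and the numbers `content (r, ℓ_r) - content (i, ℓ_i)` for
`r < i < k` (where `ℓ_i = μ.rowLen i`) are `1, …, ℓ_r + k - 1 - r`, each exactly once. -/
theorem prod_hookLength_row_mul_prod_Ioo {M : Type*} [CommMonoid M] {r k : ℕ} (hrk : r < k)
    (hk : μ.colLen 0 ≤ k) (g : ℤ → M) :
    (∏ j ∈ range (μ.rowLen r), g (hookLength μ.cells (r, j))) *
        ∏ i ∈ Ioo r k, g (content (r, μ.rowLen r) - content (i, μ.rowLen i)) =
      ∏ t ∈ range (μ.rowLen r + k - 1 - r), g (t + 1) := by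
  set s := μ.rowLen r
  set a : ℕ → ℤ := fun j => hookLength μ.cells (r, j)
  set b : ℕ → ℤ := fun i => content (r, s) - content (i, μ.rowLen i)
  have hook (j : ℕ) (hj : j < s) : hookLength μ.cells (r, j) + r + j + 1 = s + μ.colLen j :=
    μ.hookLength_add_add_add_one (mem_iff_lt_rowLen.2 hj)
  have colLen_le (j : ℕ) : μ.colLen j ≤ k := (μ.colLen_anti 0 j j.zero_le).trans hk
  have lt_colLen (j : ℕ) (hj : j < s) : r < μ.colLen j :=
    mem_iff_lt_colLen.1 (mem_iff_lt_rowLen.2 hj)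
  have rowLen_le (i : ℕ) (hi : r ≤ i) : μ.rowLen i ≤ s := μ.rowLen_anti r i hi
  have ha : Set.InjOn a (range s) := by
    refine StrictAntiOn.injOn fun j hj j' hj' hjj' => ?_
    simp only [coe_range, Set.mem_Iio] at hj hj'
    have := μ.colLen_anti j j' hjj'.le
    have := hook j hj
    have := hook j' hj'
    simp only [a]
    omega
  have hb : Set.InjOn b (Ioo r k) := by
    refine StrictMonoOn.injOn fun i hi i' hi' hii' => ?_
    simp only [coe_Ioo, Set.mem_Ioo] at hi hi'
    have := μ.rowLen_anti i i' hii'.le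
    simp only [b, content]
    omega
  have hab : Disjoint ((range s).image a) ((Ioo r k).image b) := by
    simp only [disjoint_left, mem_image, mem_range, mem_Ioo, not_exists, not_and]
    rintro _ ⟨j, hj, rfl⟩ i ⟨hri, hik⟩ hba
    have := hook j hj
    simp only [a, b, content] at hba
    by_cases hij : (i, j) ∈ μ
    · have := mem_iff_lt_rowLen.1 hij
      have := mem_iff_lt_colLen.1 hij
      omega
    · have := mt mem_iff_lt_rowLen.2 hij
      have := mt mem_iff_lt_colLen.2 hij
      omega
  have hunion : (range s).image a ∪ (Ioo r k).image b =
      (range (s + k - 1 - r)).image fun t : ℕ => (t : ℤ) + 1 := by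
    refine eq_of_subset_of_card_le (fun x hx => ?_) ?_
    · have hx : 1 ≤ x ∧ x ≤ s + k - 1 - r := by
        rcases mem_union.1 hx with hx | hx <;> obtain ⟨y, hy, rfl⟩ := mem_image.1 hx
        · have hy := mem_range.1 hy
          have := hook y hy
          have := lt_colLen y hy
          have := colLen_le y
          simp only [a]
          omega
        · obtain ⟨hry, hyk⟩ := mem_Ioo.1 hy
          have := rowLen_le y hry.le
          simp only [b, content]
          omega
      exact mem_image.2 ⟨(x - 1).toNat, mem_range.2 (by omega), by omega⟩
    · rw [card_union_of_disjoint hab, card_image_of_injOn ha, card_image_of_injOn hb,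
        card_image_of_injective _ fun x y hxy => by simpa using hxy, card_range, card_range,
        Nat.card_Ioo]
      omega
  rw [← prod_image ha, ← prod_image hb, ← prod_union hab, hunion,
    prod_image fun x _ y _ hxy => by simpa using hxy]

theorem prod_cells_sq_div_sq_sub_one {K : Type*} [Field K] {k : ℕ}
    (hk : μ.colLen 0 ≤ k) {u : K} (hu : ∀ z : ℤ, u ≠ z) :
    ∏ x ∈ μ.cells, (u - content x) ^ 2 / ((u - content x) ^ 2 - 1) =
      u / (u + k) * ∏ i ∈ range k,
        (u - content (i, μ.rowLen i) + 1) / (u - content (i, μ.rowLen i)) := by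
  have hrow (i : ℕ) :
      ∏ x ∈ μ.cells with x.1 = i, (u - content x) ^ 2 / ((u - content x) ^ 2 - 1) =
        (u + i) / (u + i + 1) *
          ((u - content (i, μ.rowLen i) + 1) / (u - content (i, μ.rowLen i))) := by
    rw [← row, row_eq_prod, prod_product, prod_singleton]
    have := prod_range_sq_div_sq_sub_one (v := u + i)
      (fun z => by simpa [eq_sub_iff_add_eq] using hu (z - i)) (μ.rowLen i)
    simpa [content, sub_sub_eq_add_sub, add_sub_assoc] using this
  have hrows : ∀ x ∈ μ.cells, x.1 ∈ range k := fun x hx =>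
    mem_range.2 ((mem_iff_lt_colLen.1 (μ.up_left_mem le_rfl x.2.zero_le hx)).trans_le hk)
  have htelescope : ∏ i ∈ range k, (u + i) / (u + i + 1) = u / (u + k) := by
    simpa [add_assoc] using prod_range_div_of_ne_zero' (fun i : ℕ => u + i)
      (fun i => by simpa [← eq_sub_iff_add_eq] using hu (-i)) k
  rw [← prod_fiberwise_of_maps_to hrows, prod_congr rfl fun i _ => hrow i, prod_mul_distrib,
    htelescope]

end

variable {μ ν : YoungDiagram} {r s : ℕ}

theorem prod_cells_eq_prod_row_mul_prod_col {M : Type*} [CommMonoid M] (hr : μ.rowLen r = s)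
    (hs : μ.colLen s = r) {f : ℕ × ℕ → M} (hf : ∀ x ∈ μ, x.1 ≠ r → x.2 ≠ s → f x = 1) :
    ∏ x ∈ μ.cells, f x = (∏ j ∈ range s, f (r, j)) * ∏ i ∈ range r, f (i, s) := by
  have hsub : μ.row r ∪ μ.col s ⊆ μ.cells := union_subset (filter_subset _ _) (filter_subset _ _)
  have hdisj : Disjoint (μ.row r) (μ.col s) := by
    rw [row_eq_prod, col_eq_prod, hr, hs, disjoint_left]
    simp only [mem_product, mem_singleton, mem_range]
    omega
  have hout : ∀ x ∈ μ.cells, x ∉ μ.row r ∪ μ.col s → f x = 1 := fun x hx hx' =>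
    hf x hx (fun h => hx' (mem_union_left _ (mem_row_iff.2 ⟨hx, h⟩)))
      fun h => hx' (mem_union_right _ (mem_col_iff.2 ⟨hx, h⟩))
  rw [← prod_subset hsub hout, prod_union hdisj, row_eq_prod, col_eq_prod, hr, hs, prod_product,
    prod_product, prod_singleton]
  simp_rw [prod_singleton]

def AddsCell (μ ν : YoungDiagram) (c : ℕ × ℕ) : Prop :=
  c ∉ μ ∧ ∀ x, x ∈ ν ↔ x ∈ μ ∨ x = c

theorem AddsCell.transpose {c : ℕ × ℕ} (h : μ.AddsCell ν c) :
    μ.transpose.AddsCell ν.transpose c.swap := by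
  refine ⟨fun hc => h.1 (mem_transpose.1 hc), fun x => ?_⟩
  rw [mem_transpose, mem_transpose, h.2, ← Prod.swap_inj, Prod.swap_swap]

theorem AddsCell.rowLen_eq (h : μ.AddsCell ν (r, s)) : μ.rowLen r = s :=
  rowLen_eq_of_forall_mem_iff μ fun j => by
    constructor
    · intro hj
      by_contra! hsj
      exact h.1 (μ.up_left_mem le_rfl hsj hj)
    · intro hj
      have hν : (r, j) ∈ ν := ν.up_left_mem le_rfl hj.le ((h.2 _).2 (Or.inr rfl))
      exact ((h.2 _).1 hν).resolve_right (by simp [hj.ne])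

theorem AddsCell.rowLen_add (h : μ.AddsCell ν (r, s)) (i : ℕ) :
    ν.rowLen i = μ.rowLen i + if i = r then 1 else 0 := by
  refine rowLen_eq_of_forall_mem_iff ν fun j => ?_
  rw [h.2, Prod.mk.injEq, mem_iff_lt_rowLen]
  split_ifs with hi
  · subst hi
    rw [h.rowLen_eq]
    omega
  · simp [hi]

theorem AddsCell.colLen_eq (h : μ.AddsCell ν (r, s)) : μ.colLen s = r := by
  rw [← rowLen_transpose]
  exact h.transpose.rowLen_eq

theorem AddsCell.colLen_add (h : μ.AddsCell ν (r, s)) (j : ℕ) :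
    ν.colLen j = μ.colLen j + if j = s then 1 else 0 := by
  rw [← rowLen_transpose, ← rowLen_transpose]
  exact h.transpose.rowLen_add j

theorem AddsCell.hookLength_self (h : μ.AddsCell ν (r, s)) : hookLength ν.cells (r, s) = 1 := by
  have := ν.hookLength_add_add_add_one ((h.2 _).2 (Or.inr rfl))
  rw [h.rowLen_add, h.colLen_add, h.rowLen_eq, h.colLen_eq, if_pos rfl, if_pos rfl] at this
  omega

theorem AddsCell.hookLength_eq (h : μ.AddsCell ν (r, s)) {i j : ℕ} (hij : (i, j) ∈ μ) :
    hookLength ν.cells (i, j) =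
      hookLength μ.cells (i, j) + (if i = r then 1 else 0) + (if j = s then 1 else 0) := by
  have hμ := μ.hookLength_add_add_add_one hij
  have hν := ν.hookLength_add_add_add_one ((h.2 _).2 (Or.inl hij))
  rw [h.rowLen_add, h.colLen_add] at hν
  omega

theorem AddsCell.cells_eq (h : μ.AddsCell ν (r, s)) : ν.cells = insert (r, s) μ.cells := by
  ext x
  rw [mem_insert, mem_cells, mem_cells, h.2, or_comm]

theorem AddsCell.lt_of_colLen_le (h : μ.AddsCell ν (r, s)) {k : ℕ} (hk : ν.colLen 0 ≤ k) :
    r < k :=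
  (mem_iff_lt_colLen.1 (ν.up_left_mem le_rfl s.zero_le ((h.2 _).2 (Or.inr rfl)))).trans_le hk

theorem AddsCell.content_sub_div_of_lt {K : Type*} [Field K] (h : μ.AddsCell ν (r, s)) {i : ℕ}
    (hi : i < r) :
    ((content (r, s) : K) - content (i, μ.rowLen i) + 1) /
        ((content (r, s) : K) - content (i, μ.rowLen i)) =
      (hookLength μ.cells (i, s) : K) / (hookLength μ.cells (i, s) + 1) := by
  have hook := μ.hookLength_add_add_add_one (mem_iff_lt_colLen.2 (h.colLen_eq ▸ hi))
  rw [h.colLen_eq] at hook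
  have hc :
      content (r, s) - content (i, μ.rowLen i) = -((hookLength μ.cells (i, s) : ℤ) + 1) := by
    simp only [content]
    omega
  rw [← Int.cast_sub, hc, ← neg_div_neg_eq]
  push_cast
  congr 1 <;> ring

section

variable {K : Type*} [Field K] [CharZero K]

theorem AddsCell.prod_hookLength_div (h : μ.AddsCell ν (r, s)) :
    (∏ x ∈ ν.cells, (hookLength ν.cells x : K)) / ∏ x ∈ μ.cells, (hookLength μ.cells x : K) =
      (∏ j ∈ range s,
          ((hookLength μ.cells (r, j) : K) + 1) / hookLength μ.cells (r, j)) *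
        ∏ i ∈ range r, ((hookLength μ.cells (i, s) : K) + 1) / hookLength μ.cells (i, s) := by
  have hpos (x) (hx : x ∈ μ) : (hookLength μ.cells x : K) ≠ 0 := by
    exact_mod_cast (hookLength_pos hx).ne'
  rw [h.cells_eq, prod_insert h.1, ← h.cells_eq, h.hookLength_self, Nat.cast_one, one_mul,
    ← prod_div_distrib, prod_cells_eq_prod_row_mul_prod_col h.rowLen_eq h.colLen_eq]
  · congr 1 <;> refine prod_congr rfl fun j hj => ?_
    · rw [h.hookLength_eq (mem_iff_lt_rowLen.2 (h.rowLen_eq ▸ mem_range.1 hj))]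
      simp [(mem_range.1 hj).ne]
    · rw [h.hookLength_eq (mem_iff_lt_colLen.2 (h.colLen_eq ▸ mem_range.1 hj))]
      simp [(mem_range.1 hj).ne]
  · rintro ⟨i, j⟩ hx hi hj
    rw [h.hookLength_eq hx, if_neg hi, if_neg hj, add_zero, add_zero, div_self (hpos _ hx)]

theorem AddsCell.prod_row_mul_prod_Ioo (h : μ.AddsCell ν (r, s)) {k : ℕ}
    (hk : ν.colLen 0 ≤ k) :
    (∏ j ∈ range s, ((hookLength μ.cells (r, j) : K) + 1) / hookLength μ.cells (r, j)) *
        ∏ i ∈ Ioo r k, ((content (r, s) : K) - content (i, μ.rowLen i) + 1) /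
          ((content (r, s) : K) - content (i, μ.rowLen i)) =
      content (r, s) + k := by
  have hrk := h.lt_of_colLen_le hk
  have hμk : μ.colLen 0 ≤ k := by
    have := h.colLen_add 0
    omega
  have key := μ.prod_hookLength_row_mul_prod_Ioo hrk hμk fun t : ℤ => ((t : K) + 1) / t
  have telescope (N : ℕ) : ∏ t ∈ range N, ((t : K) + 1 + 1) / (t + 1) = N + 1 := by
    simpa using prod_range_div_of_ne_zero (fun t : ℕ => (t : K) + 1)
      (fun t => by exact_mod_cast t.succ_ne_zero) N
  have hN : ((s + k - 1 - r : ℕ) : ℤ) + 1 = content (r, s) + k := by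
    simp only [content]
    omega
  rw [h.rowLen_eq] at key
  push_cast at key
  rw [key, telescope]
  exact_mod_cast hN

theorem AddsCell.prod_hookLength_div_prod (h : μ.AddsCell ν (r, s)) {k : ℕ}
    (hk : ν.colLen 0 ≤ k) :
    (∏ x ∈ μ.cells, (hookLength μ.cells x : K)) / ∏ x ∈ ν.cells, (hookLength ν.cells x : K) =
      ((content (r, s) : K) + k)⁻¹ * ∏ i ∈ (range k).erase r,
        ((content (r, s) : K) - content (i, μ.rowLen i) + 1) /
          ((content (r, s) : K) - content (i, μ.rowLen i)) := by
  have hrk := h.lt_of_colLen_le hk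
  have hsplit : (range k).erase r = range r ∪ Ioo r k := by
    ext i
    simp only [mem_erase, mem_range, mem_union, mem_Ioo]
    omega
  have hdisj : Disjoint (range r) (Ioo r k) := by
    simp only [disjoint_left, mem_range, mem_Ioo]
    omega
  have hck : (content (r, s) : K) + k ≠ 0 := by
    have : 0 < content (r, s) + k := by
      simp only [content]
      omega
    exact_mod_cast this.ne'
  have hPX := h.prod_row_mul_prod_Ioo (K := K) hk
  rw [← inv_div, h.prod_hookLength_div, hsplit, prod_union hdisj,
    prod_congr rfl fun i hi => h.content_sub_div_of_lt (mem_range.1 hi), ← hPX]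
  have hX := right_ne_zero_of_mul (hPX ▸ hck)
  simp_rw [← inv_div (hookLength μ.cells (_, s) : K), prod_inv_distrib, mul_inv]
  field_simp

end

theorem AddsCell.tendsto_prod_hookLength_div (h : μ.AddsCell ν (r, s)) :
    Tendsto (fun u : ℂ => (u - content (r, s)) / u *
        ∏ x ∈ μ.cells, (u - content x) ^ 2 / ((u - content x) ^ 2 - 1))
      (𝓝[≠] (content (r, s) : ℂ))
      (𝓝 ((∏ x ∈ μ.cells, (hookLength μ.cells x : ℂ)) /
        ∏ x ∈ ν.cells, (hookLength ν.cells x : ℂ))) := by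
  obtain ⟨k, hk⟩ : ∃ k, ν.colLen 0 ≤ k := ⟨_, le_rfl⟩
  have hrk := h.lt_of_colLen_le hk
  have hμk : μ.colLen 0 ≤ k := by
    have := h.colLen_add 0
    omega
  have hck : (content (r, s) : ℂ) + k ≠ 0 := by
    have : 0 < content (r, s) + k := by
      simp only [content]
      omega
    exact_mod_cast this.ne'
  have hγ : ∀ i ∈ (range k).erase r,
      (content (r, s) : ℂ) - content (i, μ.rowLen i) ≠ 0 := by
    intro i hi
    have : content (r, s) ≠ content (i, μ.rowLen i) := by
      rw [← h.rowLen_eq]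
      exact fun he => (mem_erase.1 hi).1 (μ.strictAnti_content_rowLen.injective he).symm
    exact sub_ne_zero.2 (by exact_mod_cast this)
  let R (u : ℂ) : ℂ := (u - content (r, s) + 1) / (u + k) *
    ∏ i ∈ (range k).erase r, (u - content (i, μ.rowLen i) + 1) / (u - content (i, μ.rowLen i))
  have hR : ContinuousAt R (content (r, s)) := by
    refine ContinuousAt.mul ?_ (tendsto_finsetProd _ fun i hi => ?_)
    · exact ContinuousAt.div (by fun_prop) (by fun_prop) hck
    · exact ContinuousAt.div (by fun_prop) (by fun_prop) (hγ i hi)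
  have hRc : R (content (r, s)) = (∏ x ∈ μ.cells, (hookLength μ.cells x : ℂ)) /
        ∏ x ∈ ν.cells, (hookLength ν.cells x : ℂ) := by
    simp only [R]
    rw [h.prod_hookLength_div_prod hk, sub_self, zero_add, one_div]
  have heq : R =ᶠ[𝓝[≠] (content (r, s) : ℂ)] fun u => (u - content (r, s)) / u *
      ∏ x ∈ μ.cells, (u - content x) ^ 2 / ((u - content x) ^ 2 - 1) := by
    filter_upwards [eventually_nhdsNE_ne_intCast (content (r, s))] with u hu
    have hu0 : u ≠ 0 := by exact_mod_cast hu 0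
    have huc : u - content (r, s) ≠ 0 := sub_ne_zero.2 (hu _)
    have huk : u + k ≠ 0 := by simpa [← eq_sub_iff_add_eq] using hu (-k)
    rw [μ.prod_cells_sq_div_sq_sub_one hμk hu, ← mul_prod_erase (range k) _ (mem_range.2 hrk),
      h.rowLen_eq]
    simp only [R]
    field_simp
  rw [← hRc]
  exact (hR.tendsto.mono_left nhdsWithin_le_nhds).congr' heq

end YoungDiagram

section Tableau

variable {T : Fin (n + 1) → (ℕ × ℕ) × Fin m}

theorem isLowerSet_shape
    (hstd : ∀ (j : Fin (n + 1)) (r' c' : ℕ), r' ≤ (T j).1.1 → c' ≤ (T j).1.2 →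
      ∃ j' : Fin (n + 1), j' ≤ j ∧ T j' = ((r', c'), (T j).2))
    {s : Finset (Fin (n + 1))} (hs : IsLowerSet (s : Set (Fin (n + 1)))) (k : Fin m) :
    IsLowerSet (↑((s.filter fun i => (T i).2 = k).image fun i => (T i).1) : Set (ℕ × ℕ)) := by
  rintro _ ⟨r', c'⟩ hle hx
  obtain ⟨i, hi, rfl⟩ := mem_image.1 (mem_coe.1 hx)
  obtain ⟨his, rfl⟩ := mem_filter.1 hi
  obtain ⟨j, hji, hj⟩ := hstd i r' c' hle.1 hle.2
  exact mem_coe.2 (mem_image.2 ⟨j, mem_filter.2 ⟨hs hji his, by rw [hj]⟩, by rw [hj]⟩)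

theorem isLowerSet_erase_last :
    IsLowerSet ((univ.erase (Fin.last n) : Finset (Fin (n + 1))) : Set (Fin (n + 1))) := by
  intro i j hji hi
  simp only [coe_erase, coe_univ, Set.mem_sdiff, Set.mem_univ, Set.mem_singleton_iff,
    true_and] at hi ⊢
  exact fun h => hi (le_antisymm (Fin.le_last i) (h ▸ hji))

theorem prod_eq_prod_prod_shape {M : Type*} [CommMonoid M] (hinj : Function.Injective T)
    (s : Finset (Fin (n + 1))) (f : Fin m → ℕ × ℕ → M) :
    ∏ i ∈ s, f (T i).2 (T i).1 =
      ∏ k, ∏ x ∈ (s.filter fun i => (T i).2 = k).image (fun i => (T i).1), f k x := by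
  rw [← prod_fiberwise s fun i => (T i).2]
  refine prod_congr rfl fun k _ => ?_
  rw [prod_image fun i hi j hj hij => hinj (Prod.ext hij
    ((mem_filter.1 hi).2.trans (mem_filter.1 hj).2.symm))]
  exact prod_congr rfl fun i hi => by rw [(mem_filter.1 hi).2]

theorem shapeOfErase_eq_of_ne {k : Fin m} (hk : k ≠ (T (Fin.last n)).2) :
    shapeOfErase T k = shapeOf T k := by
  unfold shapeOfErase shapeOf
  congr 1
  ext i
  simp only [mem_filter, mem_erase, mem_univ, and_true, true_and, and_iff_right_iff_imp]
  rintro rfl rfl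
  exact hk rfl

theorem addsCell_shape (hinj : Function.Injective T) {μ ν : YoungDiagram}
    (hμ : μ.cells = shapeOfErase T (T (Fin.last n)).2)
    (hν : ν.cells = shapeOf T (T (Fin.last n)).2) :
    μ.AddsCell ν (T (Fin.last n)).1 := by
  simp only [YoungDiagram.AddsCell, ← YoungDiagram.mem_cells, hμ, hν, shapeOfErase, shapeOf,
    mem_image, mem_filter, mem_erase, mem_univ, true_and, and_true]
  refine ⟨fun ⟨i, ⟨hi, hp⟩, hx⟩ => hi (hinj (Prod.ext hx hp)), fun x => ⟨?_, ?_⟩⟩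
  · rintro ⟨i, hp, rfl⟩
    by_cases hi : i = Fin.last n
    · exact Or.inr (by rw [hi])
    · exact Or.inl ⟨i, ⟨hi, hp⟩, rfl⟩
  · rintro (⟨i, ⟨-, hp⟩, rfl⟩ | rfl)
    · exact ⟨i, hp, rfl⟩
    · exact ⟨_, rfl, rfl⟩

theorem prod_hookLength_div_eq (hinj : Function.Injective T) :
    (∏ i ∈ univ.erase (Fin.last n), (hookLength (shapeOfErase T (T i).2) (T i).1 : ℂ)) /
        ∏ i, (hookLength (shapeOf T (T i).2) (T i).1 : ℂ) =
      (∏ x ∈ shapeOfErase T (T (Fin.last n)).2,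
          (hookLength (shapeOfErase T (T (Fin.last n)).2) x : ℂ)) /
        ∏ x ∈ shapeOf T (T (Fin.last n)).2, (hookLength (shapeOf T (T (Fin.last n)).2) x : ℂ) := by
  have hμ := prod_eq_prod_prod_shape hinj (univ.erase (Fin.last n))
    fun k x => (hookLength (shapeOfErase T k) x : ℂ)
  have hν := prod_eq_prod_prod_shape hinj univ fun k x => (hookLength (shapeOf T k) x : ℂ)
  have hne : ∏ k ∈ univ.erase (T (Fin.last n)).2, ∏ x ∈ shapeOf T k,
      (hookLength (shapeOf T k) x : ℂ) ≠ 0 :=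
    prod_ne_zero_iff.2 fun k _ => prod_ne_zero_iff.2 fun x hx => by
      exact_mod_cast (hookLength_pos hx).ne'
  have hrest : ∏ k ∈ univ.erase (T (Fin.last n)).2, ∏ x ∈ shapeOfErase T k,
      (hookLength (shapeOfErase T k) x : ℂ) = ∏ k ∈ univ.erase (T (Fin.last n)).2,
        ∏ x ∈ shapeOf T k, (hookLength (shapeOf T k) x : ℂ) :=
    prod_congr rfl fun k hk => by rw [shapeOfErase_eq_of_ne (mem_erase.1 hk).1]
  rw [hμ, hν]
  change (∏ k, ∏ x ∈ shapeOfErase T k, (hookLength (shapeOfErase T k) x : ℂ)) /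
    ∏ k, ∏ x ∈ shapeOf T k, (hookLength (shapeOf T k) x : ℂ) = _
  rw [← mul_prod_erase univ _ (mem_univ (T (Fin.last n)).2),
    ← mul_prod_erase univ _ (mem_univ (T (Fin.last n)).2), hrest]
  exact mul_div_mul_right _ _ hne

theorem prod_erase_last_sq_div_eq (hinj : Function.Injective T) {u : ℂ} (hu : ∀ z : ℤ, u ≠ z) :
    ∏ i ∈ univ.erase (Fin.last n), ((u - contentOf T i) ^ 2 /
        ((u - contentOf T i) ^ 2 - if (T i).2 = (T (Fin.last n)).2 then 1 else 0)) =
      ∏ x ∈ shapeOfErase T (T (Fin.last n)).2,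
        (u - YoungDiagram.content x) ^ 2 / ((u - YoungDiagram.content x) ^ 2 - 1) := by
  have hcontent (i : Fin (n + 1)) : contentOf T i = YoungDiagram.content (T i).1 := by
    simp [contentOf, YoungDiagram.content]
  simp_rw [hcontent]
  rw [prod_eq_prod_prod_shape hinj (univ.erase (Fin.last n)) fun k x =>
      (u - YoungDiagram.content x) ^ 2 /
        ((u - YoungDiagram.content x) ^ 2 - if k = (T (Fin.last n)).2 then 1 else 0),
    prod_eq_single (T (Fin.last n)).2]
  · simp only [if_true]
    rfl
  · intro k _ hk
    refine prod_eq_one fun x _ => ?_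
    rw [if_neg hk, sub_zero, div_self (pow_ne_zero 2 (sub_ne_zero.2 (hu _)))]
  · exact fun h => absurd (mem_univ _) h

end Tableau

/-- Let `T` be a standard `m`-tableau of shape `λ`, an `m`-partition of size `N = n+1`
(standardness and well-shapedness are encoded by: `T` is injective and every node of `T`
dominates, among the earlier entries, its whole lower rectangle in its own diagram).
Let `μ` be the shape obtained by removing the node containing `N`.  Then the rational
function `F_T(u) = ((u − c_N)/u) ∏_{i<N} (u − c_i)²/((u − c_i)² − δ_{p_i,p_N})` is
non-singular at `u = c_N` with value `F_μ/F_λ`, where `F_λ` (resp. `F_μ`) is the product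
of the hook lengths of the nodes of `λ` (resp. `μ`). -/
theorem fusion_function_limit (m n : ℕ) (T : Fin (n + 1) → (ℕ × ℕ) × Fin m)
    (hinj : Function.Injective T)
    (hstd : ∀ (j : Fin (n + 1)) (r' c' : ℕ), r' ≤ (T j).1.1 → c' ≤ (T j).1.2 →
      ∃ j' : Fin (n + 1), j' ≤ j ∧ T j' = ((r', c'), (T j).2)) :
    Filter.Tendsto
      (fun u : ℂ =>
        ((u - contentOf T (Fin.last n)) / u) *
          ∏ i ∈ Finset.univ.erase (Fin.last n),
            ((u - contentOf T i) ^ 2 /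
              ((u - contentOf T i) ^ 2 -
                (if (T i).2 = (T (Fin.last n)).2 then 1 else 0))))
      (nhdsWithin (contentOf T (Fin.last n)) {contentOf T (Fin.last n)}ᶜ)
      (nhds
        ((∏ i ∈ Finset.univ.erase (Fin.last n),
            (hookLength (shapeOfErase T (T i).2) (T i).1 : ℂ)) /
          (∏ i : Fin (n + 1), (hookLength (shapeOf T (T i).2) (T i).1 : ℂ)))) := by
  let μ : YoungDiagram := ⟨shapeOfErase T (T (Fin.last n)).2,
    isLowerSet_shape hstd isLowerSet_erase_last _⟩
  let ν : YoungDiagram := ⟨shapeOf T (T (Fin.last n)).2,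
    isLowerSet_shape hstd (by simp [isLowerSet_univ]) _⟩
  have hadd : μ.AddsCell ν (T (Fin.last n)).1 := addsCell_shape hinj rfl rfl
  have hc : contentOf T (Fin.last n) = YoungDiagram.content (T (Fin.last n)).1 := by
    simp [contentOf, YoungDiagram.content]
  rw [hc, prod_hookLength_div_eq hinj]
  refine hadd.tendsto_prod_hookLength_div.congr' ?_
  filter_upwards [eventually_nhdsNE_ne_intCast _] with u hu
  rw [prod_erase_last_sq_div_eq hinj hu]
end
end
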